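/- arXiv:0909.2522 — 3 statements merged into one kernel-verified Lean document; each statement's English description precedes it below -/
import Mathlib

section
/- If m and n are distinct positive integers such that m/n is not a prime power (i.e., neither m/n nor n/m equals p^k for a prime p and k ≥ 1), then the cyclotomic polynomials Φ_m(q) and Φ_n(q) generate the unit ideal in ℤ[q], i.e., they are comaximal in ℤ[q]. -/
open Polynomial

instance : IsJacobsonRing ℤ := by
  rw [isJacobsonRing_iff_prime_eq]
  intro P hP
  rcases eq_or_ne P ⊥ with rfl | hPb
  · refine le_antisymm (fun x hx => ?_) Ideal.le_jacobson
    rw [Ideal.mem_jacobson_bot] at hx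
    have h1 := Int.isUnit_iff.mp (hx 1)
    have h2 := Int.isUnit_iff.mp (hx 2)
    simp only [Ideal.mem_bot]
    omega
  · exact Ideal.jacobson_eq_self_of_isMaximal (H := IsPrime.to_maximal_ideal (hpi := hP) hPb)

/-- If `m ≠ n` are positive integers such that neither `m/n` nor `n/m` is `p^k`
for a prime `p` and `k ≥ 1`, then the cyclotomic polynomials `Φ_m` and `Φ_n`
are comaximal in `ℤ[q]`. -/
theorem cyclotomic_comaximal_of_not_primePow (m n : ℕ) (hm : 0 < m) (hn : 0 < n)
    (hmn : m ≠ n)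
    (h : ¬ ∃ (p k : ℕ), p.Prime ∧ 1 ≤ k ∧ (m = n * p ^ k ∨ n = m * p ^ k)) :
    Ideal.span {Polynomial.cyclotomic m ℤ, Polynomial.cyclotomic n ℤ} = ⊤ := by
  by_contra hI
  obtain ⟨M, hM, hle⟩ := Ideal.exists_le_maximal _ hI
  have h1 : Polynomial.cyclotomic m ℤ ∈ M := hle (Ideal.subset_span (by simp))
  have h2 : Polynomial.cyclotomic n ℤ ∈ M := hle (Ideal.subset_span (by simp))
  haveI := hM
  letI K := Polynomial ℤ ⧸ M
  letI : Field K := Ideal.Quotient.field M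
  -- the comap of M along C is a maximal ideal of ℤ, hence nonzero
  have hP' : (M.comap (Polynomial.C : ℤ →+* Polynomial ℤ)).IsMaximal :=
    Polynomial.isMaximal_comap_C_of_isJacobsonRing M
  have hPbot : M.comap (Polynomial.C : ℤ →+* Polynomial ℤ) ≠ ⊥ := by
    intro hbot
    rw [hbot] at hP'
    have : IsField (ℤ ⧸ (⊥ : Ideal ℤ)) :=
      (Ideal.Quotient.maximal_ideal_iff_isField_quotient _).mp hP'
    exact Int.not_isField
      (MulEquiv.isField this (RingEquiv.quotientBot ℤ).symm.toMulEquiv)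
  obtain ⟨z, hzM, hz0⟩ := Submodule.ne_bot_iff _ |>.mp hPbot
  -- the quotient field has positive prime characteristic
  have hzK : ((z : ℤ) : K) = 0 := by
    have hthis : Ideal.Quotient.mk M (Polynomial.C z) = 0 :=
      Ideal.Quotient.eq_zero_iff_mem.mpr hzM
    have hCz : (Polynomial.C z : Polynomial ℤ) = (z : Polynomial ℤ) := by
      simp [Polynomial.C_eq_intCast]
    rwa [hCz, map_intCast] at hthis
  have hnotCZ : ¬ CharZero K := by
    intro hc
    exact hz0 (by exact_mod_cast hzK)
  set p := ringChar K with hp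
  haveI hcp : CharP K p := ringChar.charP K
  have hp0 : p ≠ 0 := by
    intro h0
    haveI : CharP K 0 := h0 ▸ hcp
    exact hnotCZ (CharP.charP_to_charZero K)
  have hpp : p.Prime := ((CharP.char_is_prime_or_zero K p).resolve_right hp0)
  haveI : Fact p.Prime := ⟨hpp⟩
  -- evaluation at ζ = X mod M
  set ζ : K := Ideal.Quotient.mk M Polynomial.X with hζ
  have key : ∀ f : Polynomial ℤ,
      Ideal.Quotient.mk M f
        = Polynomial.eval ζ (f.map ((Ideal.Quotient.mk M).comp Polynomial.C)) := by
    intro f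
    rw [Polynomial.eval_map]
    have : (Polynomial.eval₂RingHom ((Ideal.Quotient.mk M).comp Polynomial.C) ζ)
        = Ideal.Quotient.mk M :=
      Polynomial.ringHom_ext (fun a => by simp) (by simp [hζ])
    exact (congrFun (congrArg (fun g => g.toFun) this) f).symm
  have root : ∀ l : ℕ, Polynomial.cyclotomic l ℤ ∈ M →
      (Polynomial.cyclotomic l K).IsRoot ζ := by
    intro l hl
    have := Ideal.Quotient.eq_zero_iff_mem.mpr hl
    rw [key] at this
    rwa [Polynomial.map_cyclotomic] at this
  -- ζ is a primitive root of unity of order ordCompl[p] m and ordCompl[p] n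
  have prim : ∀ l : ℕ, 0 < l → Polynomial.cyclotomic l ℤ ∈ M →
      IsPrimitiveRoot ζ (ordCompl[p] l) := by
    intro l hl hlM
    have hr := root l hlM
    have hnd : ¬ p ∣ ordCompl[p] l := Nat.not_dvd_ordCompl hpp hl.ne'
    haveI : NeZero ((ordCompl[p] l : ℕ) : K) := NeZero.of_not_dvd K hnd
    rw [← Nat.ordProj_mul_ordCompl_eq_self l p] at hr
    exact (Polynomial.isRoot_cyclotomic_prime_pow_mul_iff_of_charP).mp hr
  have hmn' : ordCompl[p] m = ordCompl[p] n :=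
    (prim m hm h1).unique (prim n hn h2)
  set a := m.factorization p
  set b := n.factorization p
  set c := ordCompl[p] m with hc
  have hmeq : p ^ a * c = m := Nat.ordProj_mul_ordCompl_eq_self m p
  have hneq : p ^ b * c = n := by
    rw [hmn']; exact Nat.ordProj_mul_ordCompl_eq_self n p
  apply h
  rcases lt_trichotomy a b with hab | hab | hab
  · refine ⟨p, b - a, hpp, by omega, Or.inr ?_⟩
    rw [← hmeq, ← hneq, mul_right_comm, ← pow_add]
    congr 2
    omega
  · exact absurd (by rw [← hmeq, ← hneq, hab]) hmn
  · refine ⟨p, a - b, hpp, by omega, Or.inl ?_⟩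
    rw [← hmeq, ← hneq, mul_right_comm, ← pow_add]
    congr 2
    omega
end

section
/- Let C be a commutative ℤ-algebra and ψ : C ⊗ ℂ → ℂ[q, q⁻¹] a ℂ-algebra morphism (restricting to a map from C). Suppose that for every positive integer N and every ℤ-algebra morphism f : C → ℤC_N (with C_N cyclic of order N), the composite C → C⊗ℂ → ℂ[q,q⁻¹] → ℂ[q,q⁻¹]/(q^N−1) ≅ ℂC_N agrees with f followed by the inclusion ℤC_N ⊂ ℂC_N. Then ψ(C) ⊆ ℤ[q, q⁻¹]. -/
/-- The natural inclusion `ℤ[q,q⁻¹] → ℂ[q,q⁻¹]` extending the coefficients. -/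
noncomputable def intLaurentToComplex : LaurentPolynomial ℤ →+* LaurentPolynomial ℂ :=
  (AddMonoidAlgebra.lift ℤ (LaurentPolynomial ℂ) ℤ
    { toFun := fun n => LaurentPolynomial.T n.toAdd
      map_one' := LaurentPolynomial.T_zero (R := ℂ)
      map_mul' := fun a b => LaurentPolynomial.T_add (R := ℂ) a.toAdd b.toAdd }).toRingHom

lemma ilc_single (a : ℤ) (b : ℤ) :
    intLaurentToComplex (AddMonoidAlgebra.single a b) = AddMonoidAlgebra.single a (b : ℂ) := by
  show AddMonoidAlgebra.lift ℤ (LaurentPolynomial ℂ) ℤ _ (AddMonoidAlgebra.single a b) = _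
  rw [AddMonoidAlgebra.lift_single]
  show b • LaurentPolynomial.T _ = _
  rw [← Int.cast_smul_eq_zsmul ℂ]
  show (b:ℂ) • LaurentPolynomial.T (Multiplicative.ofAdd a).toAdd = _
  rw [show (Multiplicative.ofAdd a).toAdd = a from rfl, LaurentPolynomial.single_eq_C_mul_T,
    Algebra.smul_def, LaurentPolynomial.C_eq_algebraMap]

lemma ilc_eq (g : LaurentPolynomial ℤ) :
    (intLaurentToComplex g).coeff = Finsupp.mapRange (Int.cast) Int.cast_zero g.coeff := by
  induction g using AddMonoidAlgebra.induction_linear with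
  | zero => simp
  | add f g hf hg => rw [map_add, AddMonoidAlgebra.coeff_add, hf, hg, AddMonoidAlgebra.coeff_add, Finsupp.mapRange_add (by push_cast; simp)]
  | single a b => rw [ilc_single, AddMonoidAlgebra.coeff_single, AddMonoidAlgebra.coeff_single, Finsupp.mapRange_single]

/-- If a ring morphism `ψ : C → ℂ[q,q⁻¹]` is, modulo `(q^N - 1)` for every `N ≥ 1`,
induced by a morphism `C → ℤC_N = ℤ[q,q⁻¹]/(q^N-1)`, then `ψ(C) ⊆ ℤ[q,q⁻¹]`. -/
theorem psi_image_integral (C : Type*) [CommRing C] (ψ : C →+* LaurentPolynomial ℂ)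
    (h : ∀ N : ℕ, 0 < N → ∃ f : C →+* LaurentPolynomial ℤ, ∀ c : C,
      Ideal.Quotient.mk (Ideal.span {LaurentPolynomial.T (R := ℂ) (N : ℤ) - 1}) (ψ c) =
      Ideal.Quotient.mk (Ideal.span {LaurentPolynomial.T (R := ℂ) (N : ℤ) - 1})
        (intLaurentToComplex (f c))) :
    ∀ c : C, ψ c ∈ Set.range intLaurentToComplex := by
  intro c
  set p : LaurentPolynomial ℂ := ψ c with hp
  have key : ∀ n : ℤ, ∃ m : ℤ, (m : ℂ) = p.coeff n := by
    intro n
    set N : ℕ := 1 + (p.coeff.support.sup fun k => (k - n).natAbs) with hN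
    have hNpos : 0 < N := by omega
    obtain ⟨f, hf⟩ := h N hNpos
    set g : LaurentPolynomial ℂ := intLaurentToComplex (f c) with hg
    have hdiff : p - g ∈ Ideal.span {LaurentPolynomial.T (R := ℂ) (N : ℤ) - 1} :=
      Ideal.Quotient.eq.mp (hf c)
    set π : LaurentPolynomial ℂ →+* AddMonoidAlgebra ℂ (ZMod N) :=
      AddMonoidAlgebra.mapDomainRingHom ℂ (Int.castAddHom (ZMod N)) with hπ
    have hπT : π (LaurentPolynomial.T (R := ℂ) (N : ℤ) - 1) = 0 := by
      have h1 : π (LaurentPolynomial.T (R := ℂ) (N : ℤ)) = 1 := by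
        have h0 : π (LaurentPolynomial.T (R := ℂ) (N : ℤ)) =
            AddMonoidAlgebra.mapDomain (Int.castAddHom (ZMod N)) (AddMonoidAlgebra.single ((N : ℤ)) (1 : ℂ)) := rfl
        rw [h0, AddMonoidAlgebra.mapDomain_single, AddMonoidAlgebra.one_def]
        norm_num
      rw [map_sub, h1, map_one, sub_self]
    have hπeq : π p = π g := by
      obtain ⟨d, hd⟩ := Ideal.mem_span_singleton'.mp hdiff
      have h0 : π (p - g) = 0 := by rw [← hd, map_mul, hπT, mul_zero]
      rw [map_sub, sub_eq_zero] at h0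
      exact h0
    have expand : ∀ v : LaurentPolynomial ℂ,
        (π v).coeff ((n : ZMod N)) = ∑ a ∈ v.coeff.support, if ((a : ZMod N) = (n : ZMod N)) then v.coeff a else 0 := by
      intro v
      show (Finsupp.mapDomain _ v.coeff) _ = _
      rw [Finsupp.mapDomain, Finsupp.sum_apply]
      rw [Finsupp.sum]
      refine Finset.sum_congr rfl fun a _ => ?_
      simp [Finsupp.single_apply]
    have hclass : ∀ k ∈ p.coeff.support, ((k : ZMod N) = (n : ZMod N)) ↔ k = n := by
      intro k hk
      constructor
      · intro he
        have hdvd : (N : ℤ) ∣ k - n := by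
          have := (ZMod.intCast_eq_intCast_iff _ _ _).mp he
          exact Int.ModEq.dvd this.symm
        by_contra hne
        have hne' : k - n ≠ 0 := fun hc => hne (by omega)
        have h2 : N ≤ (k - n).natAbs :=
          Nat.le_of_dvd (Int.natAbs_pos.mpr hne') (by simpa using Int.natAbs_dvd_natAbs.mpr hdvd)
        have h1 : (k - n).natAbs ≤ N - 1 := by
          have h3 : (k - n).natAbs ≤ p.coeff.support.sup fun k => (k - n).natAbs :=
            Finset.le_sup (f := fun k => (k - n).natAbs) hk
          omega
        omega
      · rintro rfl; rfl
    have hL : (π p).coeff ((n : ZMod N)) = p.coeff n := by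
      rw [expand]
      rw [Finset.sum_congr rfl fun a ha => if_congr (hclass a ha) rfl rfl]
      rw [Finset.sum_ite_eq' p.coeff.support n p.coeff]
      split_ifs with hmem
      · rfl
      · exact (Finsupp.notMem_support_iff.mp hmem).symm
    have hR : ∃ m : ℤ, (π g).coeff ((n : ZMod N)) = (m : ℂ) := by
      rw [expand]
      refine ⟨∑ a ∈ g.coeff.support, if ((a : ZMod N) = (n : ZMod N)) then (f c).coeff a else 0, ?_⟩
      push_cast
      refine Finset.sum_congr rfl fun a _ => ?_
      rw [hg, ilc_eq, Finsupp.mapRange_apply]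
    obtain ⟨m, hm⟩ := hR
    exact ⟨m, by rw [← hm, ← hπeq, hL]⟩
  choose m hm using key
  refine ⟨∑ n ∈ p.coeff.support, AddMonoidAlgebra.single n (m n), ?_⟩
  rw [map_sum]
  simp_rw [ilc_single, hm]
  exact AddMonoidAlgebra.sum_coeff_single p
end

section
/- The group PSL₂(ℤ) is isomorphic to the free product C₂ * C₃ of a cyclic group of order 2 and a cyclic group of order 3, generated by the images of S = [[0,−1],[1,0]] and ST where T = [[1,1],[0,1]]. -/
open Matrix

/-- The matrix `S = [[0,-1],[1,0]]` in `SL₂(ℤ)`. -/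
def Smat : Matrix.SpecialLinearGroup (Fin 2) ℤ :=
  ⟨!![0, -1; 1, 0], by simp [Matrix.det_fin_two_of]⟩

/-- The matrix `T = [[1,1],[0,1]]` in `SL₂(ℤ)`. -/
def Tmat : Matrix.SpecialLinearGroup (Fin 2) ℤ :=
  ⟨!![1, 1; 0, 1], by simp [Matrix.det_fin_two_of]⟩

open UpperHalfPlane Pointwise

abbrev SL2 := Matrix.SpecialLinearGroup (Fin 2) ℤ
abbrev PSL2 := SL2 ⧸ Subgroup.center SL2

lemma Smat_eq : Smat = ModularGroup.S := Subtype.ext (by norm_num [Smat, ModularGroup.S])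
lemma Tmat_eq : Tmat = ModularGroup.T := Subtype.ext (by norm_num [Tmat, ModularGroup.T])

def Wmat : SL2 := ⟨!![-1, 0; 0, -1], by simp [Matrix.det_fin_two_of]⟩

lemma S_sq : Smat * Smat = Wmat := Subtype.ext (by decide)
lemma TS_cube : (Tmat * Smat) * (Tmat * Smat) * (Tmat * Smat) = Wmat := Subtype.ext (by decide)
lemma W_center : Wmat ∈ Subgroup.center SL2 := by
  rw [Matrix.SpecialLinearGroup.mem_center_iff]
  exact ⟨-1, by norm_num, by decide⟩

/-! ### Generation of `SL₂(ℤ)` by `S` and `T` -/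

lemma natAbs_emod_lt (a c : ℤ) (h : c ≠ 0) : (a % c).natAbs < c.natAbs := by
  have h1 : 0 ≤ a % c := Int.emod_nonneg a h
  have h2 : a % |c| < |c| := Int.emod_lt_of_pos a (abs_pos.mpr h)
  rw [Int.emod_abs, Int.abs_eq_natAbs] at h2
  omega

lemma coe_Tmat_zpow (n : ℤ) : ((Tmat ^ n : SL2) : Matrix (Fin 2) (Fin 2) ℤ) = !![1, n; 0, 1] := by
  rw [Tmat_eq]; exact ModularGroup.coe_T_zpow n

lemma mem_closure_ST (g : SL2) : g ∈ Subgroup.closure {Smat, Tmat} := by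
  set H := Subgroup.closure {Smat, Tmat} with hH
  have hS : Smat ∈ H := Subgroup.subset_closure (by simp)
  have hT : Tmat ∈ H := Subgroup.subset_closure (by simp)
  have hW : Wmat ∈ H := S_sq ▸ mul_mem hS hS
  have hdet : ∀ h : SL2, h.1 0 0 * h.1 1 1 - h.1 0 1 * h.1 1 0 = 1 := fun h => by
    have := h.2; rwa [Matrix.det_fin_two] at this
  generalize hn : (g.1 1 0).natAbs = n
  induction n using Nat.strong_induction_on generalizing g with
  | _ n ih =>
    by_cases hc : g.1 1 0 = 0
    · have had : g.1 0 0 * g.1 1 1 = 1 := by have := hdet g; rw [hc] at this; linarith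
      rcases Int.mul_eq_one_iff_eq_one_or_neg_one.mp had with ⟨ha, hd⟩ | ⟨ha, hd⟩
      · have : g = Tmat ^ (g.1 0 1) := by
          apply Subtype.ext
          rw [coe_Tmat_zpow]
          ext i j
          fin_cases i <;> fin_cases j <;> simp [ha, hd, hc]
        rw [this]; exact zpow_mem hT _
      · have : g = Wmat * Tmat ^ (-(g.1 0 1)) := by
          apply Subtype.ext
          rw [Matrix.SpecialLinearGroup.coe_mul, coe_Tmat_zpow]
          ext i j
          fin_cases i <;> fin_cases j <;>
            simp [Wmat, Matrix.mul_apply, Fin.sum_univ_two, ha, hd, hc]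
        rw [this]; exact mul_mem hW (zpow_mem hT _)
    · set a := g.1 0 0 with ha
      set c := g.1 1 0 with hcdef
      set m := -(a / c) with hm
      have key : ((Smat * Tmat ^ m * g).1) 1 0 = a % c := by
        rw [Matrix.SpecialLinearGroup.coe_mul, Matrix.SpecialLinearGroup.coe_mul, coe_Tmat_zpow]
        simp [Smat, Matrix.mul_apply, Fin.sum_univ_two, hm]
        rw [Int.emod_def]; ring
      have hlt : ((Smat * Tmat ^ m * g).1 1 0).natAbs < n := by
        rw [key, ← hn]; exact natAbs_emod_lt a c hc
      have hmem := ih _ hlt (Smat * Tmat ^ m * g) rfl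
      have : g = (Smat * Tmat ^ m)⁻¹ * (Smat * Tmat ^ m * g) := by group
      rw [this]
      exact mul_mem (inv_mem (mul_mem hS (zpow_mem hT _))) hmem

/-! ### Action of `PSL₂(ℤ)` on the upper half plane -/

lemma center_smul_triv (A : SL2) (hA : A ∈ Subgroup.center SL2) (z : ℍ) : A • z = z := by
  obtain ⟨r, hr, hA⟩ := Matrix.SpecialLinearGroup.mem_center_iff.mp hA
  have hrr : r * r = 1 := by simpa [sq, Fintype.card_fin] using hr
  have hr' : r = 1 ∨ r = -1 := Int.isUnit_iff.mp (IsUnit.of_mul_eq_one r hrr)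
  have key : ∀ i j, (A : Matrix (Fin 2) (Fin 2) ℤ) i j = if i = j then r else 0 := by
    intro i j
    rw [← hA, Matrix.scalar_apply, Matrix.diagonal_apply]
  have h00 := key 0 0; have h01 := key 0 1; have h10 := key 1 0; have h11 := key 1 1
  norm_num at h00 h01 h10 h11
  have hrne : (r : ℂ) ≠ 0 := by rcases hr' with h | h <;> norm_num [h]
  ext1
  rw [UpperHalfPlane.specialLinearGroup_apply]
  simp only [h00, h01, h10, h11, coe_mk, algebraMap_int_eq, Int.coe_castRingHom,
    Int.cast_zero, Complex.ofReal_zero, zero_mul, add_zero, zero_add, Complex.ofReal_intCast]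
  rw [mul_comm (r : ℂ)]
  exact mul_div_cancel_right₀ _ hrne

noncomputable def rho : PSL2 →* Equiv.Perm ℍ :=
  QuotientGroup.lift (Subgroup.center SL2) (MulAction.toPermHom SL2 ℍ) (by
    intro A hA
    simp only [MonoidHom.mem_ker]
    refine Equiv.ext fun z => ?_
    exact center_smul_triv A hA z)

noncomputable instance : MulAction PSL2 ℍ := MulAction.compHom ℍ rho

lemma psl_smul (A : SL2) (z : ℍ) : (QuotientGroup.mk A : PSL2) • z = A • z := rfl

/-! ### Ping-pong estimates -/

lemma re_S_smul (z : ℍ) : (Smat • z).re = -z.re / Complex.normSq (z : ℂ) := by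
  rw [Smat_eq, modular_S_smul]
  simp [UpperHalfPlane.coe_mk, Complex.inv_re, Complex.normSq_neg, neg_div]

lemma re_TS_smul (z : ℍ) : ((Tmat * Smat) • z).re = 1 - z.re / Complex.normSq (z : ℂ) := by
  rw [mul_smul, Tmat_eq, modular_T_smul]
  rw [vadd_re, re_S_smul z]
  ring

lemma pp1 (z : ℍ) (h : 0 < z.re) : (Smat • z).re < 0 := by
  rw [re_S_smul]
  exact div_neg_of_neg_of_pos (neg_neg_of_pos h) (normSq_pos z)

lemma pp2 (z : ℍ) (h : z.re < 0) : 1 < ((Tmat * Smat) • z).re := by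
  rw [re_TS_smul]
  have := div_pos (neg_pos.mpr h) (normSq_pos z)
  rw [neg_div] at this
  linarith

lemma pp3 (z : ℍ) (h : 1 < z.re) : 0 < ((Tmat * Smat) • z).re := by
  rw [re_TS_smul]
  have h1 : Complex.normSq (z : ℂ) = z.re * z.re + z.im * z.im := Complex.normSq_apply _
  have h2 : 0 < Complex.normSq (z : ℂ) := normSq_pos z
  rw [sub_pos, div_lt_one h2]
  nlinarith [sq_nonneg z.im, UpperHalfPlane.im_pos z]

/-! ### Cyclic group homomorphisms -/

noncomputable def cyc {G : Type*} [Group G] {n : ℕ} (g : G) (h : g ^ (n : ℤ) = 1) :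
    Multiplicative (ZMod n) →* G :=
  AddMonoidHom.toMultiplicativeLeft
    (ZMod.lift n ⟨zmultiplesHom (Additive G) (Additive.ofMul g), h⟩)

lemma cyc_coe {G : Type*} [Group G] {n : ℕ} (g : G) (h : g ^ (n : ℤ) = 1) (k : ℤ) :
    cyc g h (Multiplicative.ofAdd ((k : ZMod n))) = g ^ k := by
  change Additive.toMul (ZMod.lift n ⟨zmultiplesHom (Additive G) (Additive.ofMul g), h⟩ (k : ZMod n)) = g ^ k
  rw [ZMod.lift_coe]
  simp

/-! ### The two cyclic subgroups of `PSL₂(ℤ)` -/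

noncomputable def sbar : PSL2 := QuotientGroup.mk Smat
noncomputable def tsbar : PSL2 := QuotientGroup.mk (Tmat * Smat)

lemma sbar_sq : sbar ^ ((2 : ℕ) : ℤ) = 1 := by
  show (QuotientGroup.mk Smat : PSL2) ^ ((2:ℕ):ℤ) = 1
  rw [zpow_natCast, ← QuotientGroup.mk_pow, QuotientGroup.eq_one_iff]
  have : Smat ^ 2 = Wmat := by rw [pow_two]; exact S_sq
  rw [this]; exact W_center

lemma tsbar_cube : tsbar ^ ((3 : ℕ) : ℤ) = 1 := by
  show (QuotientGroup.mk (Tmat * Smat) : PSL2) ^ ((3:ℕ):ℤ) = 1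
  rw [zpow_natCast, ← QuotientGroup.mk_pow, QuotientGroup.eq_one_iff]
  have : (Tmat * Smat) ^ 3 = Wmat := by
    rw [pow_succ, pow_two]; exact TS_cube
  rw [this]; exact W_center

noncomputable def fS : Multiplicative (ZMod 2) →* PSL2 := cyc sbar sbar_sq
noncomputable def fTS : Multiplicative (ZMod 3) →* PSL2 := cyc tsbar tsbar_cube

lemma fS_one : fS (Multiplicative.ofAdd (1 : ZMod 2)) = sbar := by
  have : (1 : ZMod 2) = ((1 : ℤ) : ZMod 2) := by norm_num
  rw [fS, this, cyc_coe, zpow_one]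

lemma fTS_one : fTS (Multiplicative.ofAdd (1 : ZMod 3)) = tsbar := by
  have : (1 : ZMod 3) = ((1 : ℤ) : ZMod 3) := by norm_num
  rw [fTS, this, cyc_coe, zpow_one]

lemma fTS_two : fTS (Multiplicative.ofAdd (2 : ZMod 3)) = tsbar * tsbar := by
  have : (2 : ZMod 3) = ((2 : ℤ) : ZMod 3) := by norm_num
  rw [fTS, this, cyc_coe, zpow_two]

/-! ### The indexed family for `CoprodI` -/

def Hfam : Bool → Type := fun b => Bool.rec (Multiplicative (ZMod 2)) (Multiplicative (ZMod 3)) b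

instance (b : Bool) : Group (Hfam b) :=
  Bool.rec (motive := fun b => Group (Hfam b))
    (inferInstance : Group (Multiplicative (ZMod 2)))
    (inferInstance : Group (Multiplicative (ZMod 3))) b

noncomputable def ffam : ∀ b, Hfam b →* PSL2 :=
  fun b => Bool.rec (motive := fun b => Hfam b →* PSL2) fS fTS b

def Xfam : Bool → Set ℍ :=
  fun b => Bool.rec (motive := fun _ => Set ℍ) {z : ℍ | z.re < 0} {z : ℍ | 0 < z.re} b

lemma sbar_smul (z : ℍ) : sbar • z = Smat • z := psl_smul _ _
lemma tsbar_smul (z : ℍ) : tsbar • z = (Tmat * Smat) • z := psl_smul _ _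

lemma hpp : Pairwise fun i j => ∀ h : Hfam i, h ≠ 1 → ffam i h • Xfam j ⊆ Xfam i := by
  intro i j hij
  cases i <;> cases j <;> try exact absurd rfl hij
  · -- i = false (C₂), j = true
    intro h hh
    have key2 : ∀ h : Multiplicative (ZMod 2), h ≠ 1 → h = Multiplicative.ofAdd 1 := by decide
    have : h = Multiplicative.ofAdd (1 : ZMod 2) := key2 h hh
    subst this
    rintro x ⟨z, hz, rfl⟩
    show (fS (Multiplicative.ofAdd (1 : ZMod 2)) • z).re < 0
    rw [fS_one, sbar_smul]
    exact pp1 z hz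
  · -- i = true (C₃), j = false
    intro h hh
    have key3 : ∀ h : Multiplicative (ZMod 3), h ≠ 1 →
        h = Multiplicative.ofAdd 1 ∨ h = Multiplicative.ofAdd 2 := by decide
    have : h = Multiplicative.ofAdd (1 : ZMod 3) ∨ h = Multiplicative.ofAdd (2 : ZMod 3) :=
      key3 h hh
    rcases this with rfl | rfl
    · rintro x ⟨z, hz, rfl⟩
      show 0 < (fTS (Multiplicative.ofAdd (1 : ZMod 3)) • z).re
      rw [fTS_one, tsbar_smul]
      have := pp2 z hz
      linarith
    · rintro x ⟨z, hz, rfl⟩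
      show 0 < (fTS (Multiplicative.ofAdd (2 : ZMod 3)) • z).re
      rw [fTS_two, mul_smul, tsbar_smul, tsbar_smul]
      exact pp3 _ (pp2 z hz)

lemma hXdisj : Pairwise (Function.onFun Disjoint Xfam) := by
  intro i j hij
  cases i <;> cases j <;> try exact absurd rfl hij
  · exact Set.disjoint_left.mpr fun z (hz : z.re < 0) (hz' : 0 < z.re) => by linarith
  · exact Set.disjoint_left.mpr fun z (hz : 0 < z.re) (hz' : z.re < 0) => by linarith

lemma hXnonempty : ∀ b, (Xfam b).Nonempty := by
  intro b
  cases b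
  · refine ⟨⟨Complex.I - 1, by simp⟩, ?_⟩
    show UpperHalfPlane.re _ < 0
    simp [UpperHalfPlane.re, UpperHalfPlane.coe_mk]
  · refine ⟨⟨Complex.I + 1, by simp⟩, ?_⟩
    show 0 < UpperHalfPlane.re _
    simp [UpperHalfPlane.re, UpperHalfPlane.coe_mk]

lemma hcard : 3 ≤ Cardinal.mk Bool ∨ ∃ b, 3 ≤ Cardinal.mk (Hfam b) := by
  right
  refine ⟨true, ?_⟩
  show (3 : Cardinal) ≤ Cardinal.mk (Multiplicative (ZMod 3))
  rw [Cardinal.mk_fintype]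
  simp

noncomputable def liftF : Monoid.CoprodI Hfam →* PSL2 := Monoid.CoprodI.lift ffam

lemma liftF_inj : Function.Injective liftF :=
  Monoid.CoprodI.lift_injective_of_ping_pong ffam hcard Xfam hXnonempty hXdisj hpp

/-! ### Bridge between `Coprod` and `CoprodI` -/

noncomputable def uHom : Monoid.Coprod (Multiplicative (ZMod 2)) (Multiplicative (ZMod 3)) →*
    Monoid.CoprodI Hfam :=
  Monoid.Coprod.lift (Monoid.CoprodI.of (M := Hfam) (i := false))
    (Monoid.CoprodI.of (M := Hfam) (i := true))

noncomputable def vHom : Monoid.CoprodI Hfam →*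
    Monoid.Coprod (Multiplicative (ZMod 2)) (Multiplicative (ZMod 3)) :=
  Monoid.CoprodI.lift (fun b => Bool.rec
    (motive := fun b => Hfam b →* Monoid.Coprod (Multiplicative (ZMod 2)) (Multiplicative (ZMod 3)))
    Monoid.Coprod.inl Monoid.Coprod.inr b)

noncomputable def eEquiv : Monoid.Coprod (Multiplicative (ZMod 2)) (Multiplicative (ZMod 3)) ≃*
    Monoid.CoprodI Hfam :=
  MonoidHom.toMulEquiv uHom vHom
    (by
      apply Monoid.Coprod.hom_ext
      · refine MonoidHom.ext fun x => ?_
        show vHom (uHom (Monoid.Coprod.inl x)) = Monoid.Coprod.inl x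
        rw [uHom]; erw [Monoid.Coprod.lift_apply_inl (Monoid.CoprodI.of (M := Hfam) (i := false)) (Monoid.CoprodI.of (M := Hfam) (i := true)) x]
        exact Monoid.CoprodI.lift_of _ _
      · refine MonoidHom.ext fun x => ?_
        show vHom (uHom (Monoid.Coprod.inr x)) = Monoid.Coprod.inr x
        rw [uHom]; erw [Monoid.Coprod.lift_apply_inr (Monoid.CoprodI.of (M := Hfam) (i := false)) (Monoid.CoprodI.of (M := Hfam) (i := true)) x]
        exact Monoid.CoprodI.lift_of _ _)
    (by
      apply Monoid.CoprodI.ext_hom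
      intro i
      cases i
      · ext x
        show uHom (vHom (Monoid.CoprodI.of x)) = Monoid.CoprodI.of x
        have h1 : vHom (Monoid.CoprodI.of x) = Monoid.Coprod.inl x := Monoid.CoprodI.lift_of _ _
        rw [h1, uHom]
        exact Monoid.Coprod.lift_apply_inl _ _ x
      · ext x
        show uHom (vHom (Monoid.CoprodI.of x)) = Monoid.CoprodI.of x
        have h1 : vHom (Monoid.CoprodI.of x) = Monoid.Coprod.inr x := Monoid.CoprodI.lift_of _ _
        rw [h1, uHom]
        exact Monoid.Coprod.lift_apply_inr _ _ x)

noncomputable def psi : Monoid.Coprod (Multiplicative (ZMod 2)) (Multiplicative (ZMod 3)) →* PSL2 :=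
  liftF.comp uHom

lemma psi_inl (x : Multiplicative (ZMod 2)) : psi (Monoid.Coprod.inl x) = fS x := by
  simp [psi, uHom, liftF, Monoid.Coprod.lift_apply_inl, Monoid.CoprodI.lift_of]
  rfl

lemma psi_inr (x : Multiplicative (ZMod 3)) : psi (Monoid.Coprod.inr x) = fTS x := by
  simp [psi, uHom, liftF, Monoid.Coprod.lift_apply_inr, Monoid.CoprodI.lift_of]
  rfl

lemma psi_inj : Function.Injective psi := by
  have hu : Function.Injective uHom := eEquiv.injective
  exact liftF_inj.comp hu

lemma psi_surj : Function.Surjective psi := by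
  intro y
  obtain ⟨A, rfl⟩ := QuotientGroup.mk_surjective y
  have hA := mem_closure_ST A
  refine Subgroup.closure_induction ?_ ?_ ?_ ?_ hA
  · rintro x (rfl | rfl)
    · exact ⟨Monoid.Coprod.inl (Multiplicative.ofAdd (1 : ZMod 2)), by rw [psi_inl, fS_one]; rfl⟩
    · refine ⟨Monoid.Coprod.inr (Multiplicative.ofAdd (1 : ZMod 3)) *
        (Monoid.Coprod.inl (Multiplicative.ofAdd (1 : ZMod 2)))⁻¹, ?_⟩
      rw [_root_.map_mul, _root_.map_inv, psi_inl, psi_inr, fS_one, fTS_one]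
      show tsbar * sbar⁻¹ = _
      rw [sbar, tsbar]
      rw [← QuotientGroup.mk_inv, ← QuotientGroup.mk_mul]
      congr 1
      group
  · exact ⟨1, map_one psi⟩
  · rintro x y hx hy ⟨x', hx'⟩ ⟨y', hy'⟩
    exact ⟨x' * y', by rw [_root_.map_mul, hx', hy', ← QuotientGroup.mk_mul]⟩
  · rintro x hx ⟨x', hx'⟩
    exact ⟨x'⁻¹, by rw [_root_.map_inv, hx', ← QuotientGroup.mk_inv]⟩

noncomputable def PsiEquiv : Monoid.Coprod (Multiplicative (ZMod 2)) (Multiplicative (ZMod 3)) ≃*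
    PSL2 :=
  MulEquiv.ofBijective psi ⟨psi_inj, psi_surj⟩

/-- `PSL₂(ℤ) = SL₂(ℤ)/{±1}` is isomorphic to the free product `C₂ ∗ C₃`, with the
generators of `C₂` and `C₃` mapping to the classes of `S` and `ST` respectively. -/
theorem psl2z_iso_free_product_C2_C3 :
    ∃ φ : Monoid.Coprod (Multiplicative (ZMod 2)) (Multiplicative (ZMod 3)) ≃*
      (Matrix.SpecialLinearGroup (Fin 2) ℤ ⧸
        Subgroup.center (Matrix.SpecialLinearGroup (Fin 2) ℤ)),
      φ (Monoid.Coprod.inl (Multiplicative.ofAdd (1 : ZMod 2))) = QuotientGroup.mk Smat ∧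
      φ (Monoid.Coprod.inr (Multiplicative.ofAdd (1 : ZMod 3))) =
        QuotientGroup.mk (Smat * Tmat) := by
  have hPsi : ∀ x, PsiEquiv x = psi x := fun _ => rfl
  refine ⟨PsiEquiv.trans (MulAut.conj sbar), ?_, ?_⟩
  · show sbar * PsiEquiv (Monoid.Coprod.inl (Multiplicative.ofAdd (1 : ZMod 2))) * sbar⁻¹ = _
    rw [hPsi, psi_inl, fS_one]
    have : sbar * sbar * sbar⁻¹ = sbar := by group
    rw [this]
    rfl
  · show sbar * PsiEquiv (Monoid.Coprod.inr (Multiplicative.ofAdd (1 : ZMod 3))) * sbar⁻¹ = _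
    rw [hPsi, psi_inr, fTS_one, sbar, tsbar, ← QuotientGroup.mk_inv, ← QuotientGroup.mk_mul,
      ← QuotientGroup.mk_mul]
    congr 1
    group
end
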